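/- Let K > 0, let ε ∈ ℝ^n be nonzero, let f ∈ ℝ^n be a vector and G an n×m real matrix with ‖f‖ + ‖G‖_F ≤ K‖ε‖. Then −‖ε‖^{−3} ⟨ε, f⟩ + (1/2)( −‖ε‖^{−3} ‖G‖_F² + 3 ‖ε‖^{−5} ‖Gᵀ ε‖² ) ≤ K(1+K) ‖ε‖^{−1}. In other words, under the linear-growth bound, the generator of V(ε,t) = ‖ε‖^{−1} satisfies 𝓛V(ε,t) ≤ K(1+K) V(ε,t). -/

import Mathlib

open scoped RealInnerProductSpace

/-- Frobenius norm of an `n × m` real matrix. -/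
noncomputable def frobNorm {n m : ℕ} (G : Matrix (Fin n) (Fin m) ℝ) : ℝ :=
  Real.sqrt (∑ i, ∑ j, G i j ^ 2)

/-- Euclidean norm of a vector in `ℝ^k`. -/
noncomputable def euclNorm {k : ℕ} (v : Fin k → ℝ) : ℝ :=
  Real.sqrt (∑ i, v i ^ 2)

/-!
Each term of the generator is estimated separately. By Cauchy–Schwarz the drift term is at most
`‖f‖ ‖ε‖⁻²`, and since `‖Gᵀε‖ ≤ ‖G‖_F ‖ε‖` the Itô correction is at most `‖G‖_F² ‖ε‖⁻³`.
The linear-growth bound turns these into `K ‖ε‖⁻¹` and `K² ‖ε‖⁻¹`.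
-/

open Matrix

theorem euclNorm_eq_norm_toLp {k : ℕ} (v : Fin k → ℝ) : euclNorm v = ‖WithLp.toLp 2 v‖ := by
  simp [euclNorm, EuclideanSpace.norm_eq]

theorem frobNorm_nonneg {n m : ℕ} (G : Matrix (Fin n) (Fin m) ℝ) : 0 ≤ frobNorm G :=
  Real.sqrt_nonneg _

section Frobenius

attribute [local instance] Matrix.frobeniusSeminormedAddCommGroup

theorem frobNorm_eq_norm {n m : ℕ} (G : Matrix (Fin n) (Fin m) ℝ) : frobNorm G = ‖G‖ := by
  rw [frobenius_norm_def, frobNorm, Real.sqrt_eq_rpow]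
  simp

theorem frobNorm_transpose {n m : ℕ} (G : Matrix (Fin n) (Fin m) ℝ) :
    frobNorm Gᵀ = frobNorm G := by
  rw [frobNorm_eq_norm, frobNorm_eq_norm, frobenius_norm_transpose]

theorem euclNorm_mulVec_le {n m : ℕ} (A : Matrix (Fin n) (Fin m) ℝ) (v : Fin m → ℝ) :
    euclNorm (A *ᵥ v) ≤ frobNorm A * euclNorm v := by
  rw [euclNorm_eq_norm_toLp, euclNorm_eq_norm_toLp, frobNorm_eq_norm,
    ← frobenius_norm_replicateCol (ι := Unit), ← frobenius_norm_replicateCol (ι := Unit),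
    replicateCol_mulVec]
  exact frobenius_norm_mul _ _

end Frobenius

theorem euclNorm_ofLp {k : ℕ} (x : EuclideanSpace ℝ (Fin k)) : euclNorm x.ofLp = ‖x‖ := by
  rw [euclNorm_eq_norm_toLp, WithLp.toLp_ofLp]

theorem neg_inv_norm_pow_three_mul_inner_le {E : Type*} [NormedAddCommGroup E]
    [InnerProductSpace ℝ E] (x y : E) :
    -(‖x‖ ^ 3)⁻¹ * ⟪x, y⟫ ≤ (‖x‖ ^ 3)⁻¹ * (‖x‖ * ‖y‖) := by
  rw [neg_mul, ← mul_neg]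
  gcongr
  exact (neg_le_abs _).trans (abs_real_inner_le_norm x y)

theorem ito_correction_le {n m : ℕ} (G : Matrix (Fin n) (Fin m) ℝ)
    {x : EuclideanSpace ℝ (Fin n)} (hx : x ≠ 0) :
    (1 / 2) * (-(‖x‖ ^ 3)⁻¹ * frobNorm G ^ 2 + 3 * (‖x‖ ^ 5)⁻¹ * euclNorm (Gᵀ *ᵥ x.ofLp) ^ 2) ≤
      (‖x‖ ^ 3)⁻¹ * frobNorm G ^ 2 := by
  have hGx : euclNorm (Gᵀ *ᵥ x.ofLp) ≤ frobNorm G * ‖x‖ := by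
    simpa only [frobNorm_transpose, euclNorm_ofLp] using euclNorm_mulVec_le Gᵀ x.ofLp
  have hr : ‖x‖ ≠ 0 := norm_ne_zero_iff.mpr hx
  calc _ ≤ (1 / 2) * (-(‖x‖ ^ 3)⁻¹ * frobNorm G ^ 2 +
          3 * (‖x‖ ^ 5)⁻¹ * (frobNorm G * ‖x‖) ^ 2) := by
        gcongr
        exact Real.sqrt_nonneg _
    _ = (‖x‖ ^ 3)⁻¹ * frobNorm G ^ 2 := by field_simp; ring

theorem generator_bound_of_linear_growth_general {n m : ℕ} (K : ℝ)
    (ε f : EuclideanSpace ℝ (Fin n)) (hε : ε ≠ 0)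
    (G : Matrix (Fin n) (Fin m) ℝ)
    (hgrowth : ‖f‖ + frobNorm G ≤ K * ‖ε‖) :
    -(‖ε‖ ^ 3)⁻¹ * ⟪ε, f⟫ +
      (1 / 2) * (-(‖ε‖ ^ 3)⁻¹ * frobNorm G ^ 2 +
        3 * (‖ε‖ ^ 5)⁻¹ * euclNorm (G.transpose.mulVec (fun i => ε i)) ^ 2) ≤
    K * (1 + K) * ‖ε‖⁻¹ := by
  have hf : ‖f‖ ≤ K * ‖ε‖ := by linarith [frobNorm_nonneg G]
  have hG : frobNorm G ≤ K * ‖ε‖ := by linarith [norm_nonneg f]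
  calc _ ≤ (‖ε‖ ^ 3)⁻¹ * (‖ε‖ * ‖f‖) + (‖ε‖ ^ 3)⁻¹ * frobNorm G ^ 2 :=
        add_le_add (neg_inv_norm_pow_three_mul_inner_le ε f) (ito_correction_le G hε)
    _ ≤ (‖ε‖ ^ 3)⁻¹ * (‖ε‖ * (K * ‖ε‖)) + (‖ε‖ ^ 3)⁻¹ * (K * ‖ε‖) ^ 2 := by
        gcongr
        exact frobNorm_nonneg G
    _ = K * (1 + K) * ‖ε‖⁻¹ := by
        have hr : ‖ε‖ ≠ 0 := norm_ne_zero_iff.mpr hε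
        field_simp

/-- Under the linear-growth bound `‖f‖ + ‖G‖_F ≤ K‖ε‖`, the generator of `V(ε,t) = ‖ε‖⁻¹`
satisfies `𝓛V(ε,t) ≤ K(1+K)V(ε,t)`, i.e.
`−‖ε‖⁻³⟨ε,f⟩ + (1/2)(−‖ε‖⁻³‖G‖_F² + 3‖ε‖⁻⁵‖Gᵀε‖²) ≤ K(1+K)‖ε‖⁻¹`. -/
theorem generator_bound_of_linear_growth {n m : ℕ} (K : ℝ) (hK : 0 < K)
    (ε f : EuclideanSpace ℝ (Fin n)) (hε : ε ≠ 0)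
    (G : Matrix (Fin n) (Fin m) ℝ)
    (hgrowth : ‖f‖ + frobNorm G ≤ K * ‖ε‖) :
    -(‖ε‖ ^ 3)⁻¹ * ⟪ε, f⟫ +
      (1 / 2) * (-(‖ε‖ ^ 3)⁻¹ * frobNorm G ^ 2 +
        3 * (‖ε‖ ^ 5)⁻¹ * euclNorm (G.transpose.mulVec (fun i => ε i)) ^ 2) ≤
    K * (1 + K) * ‖ε‖⁻¹ :=
  generator_bound_of_linear_growth_general K ε f hε G hgrowth
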